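/- For every d ≥ 1 there exists δ₀ > 0, depending only on d, with the following property: whenever A_1, …, A_d ∈ M_n(ℂ) form a fuzzy d-torus of width δ ≤ δ₀ and γ_1, …, γ_{d+1} ∈ M_{d'}(ℂ) is a selfadjoint Clifford family, the matrix G̃ = ∑_{j=1}^d Im(A_j) ⊗ γ_j + ((d+1)·1 − ∑_{j=1}^d Re(A_j)) ⊗ γ_{d+1} has the property that (1−t)·(1 ⊗ γ_{d+1}) + t·G̃ is invertible for every t ∈ [0,1]; in particular G̃ is connected to 1 ⊗ γ_{d+1} by a continuous path of invertible matrices. -/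

import Mathlib

/-!
Along the segment, `(1 - t) • (1 ⊗ γ_{d+1}) + t • G̃ = ∑ᵢ Xᵢ ⊗ γᵢ` with Hermitian coefficients
`Xⱼ = t ℑ Aⱼ` and `X_{d+1} = 1 + t ∑ⱼ (1 - ℜ Aⱼ)`. The Clifford relations turn the square of such a
sum into `(∑ Xᵢ²) ⊗ 1` plus half of `∑ [Xᵢ, Xⱼ] ⊗ γᵢγⱼ`. Since `‖Aⱼ‖ ≤ 1 + δ`, we get
`X_{d+1} ≥ 1 - dδ` and hence `∑ Xᵢ² ≥ (1 - dδ)²`. On the other hand, almost unitaries that almost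
commute also almost commute with each other's adjoints, so every `[Xᵢ, Xⱼ]` has norm `O(dδ)`.
For small `δ` the square is thus bounded below by a positive scalar, and the sum is invertible.
-/

open Matrix
open scoped Kronecker Matrix.Norms.L2Operator ComplexOrder

noncomputable section

/-- The "real part" `(A + A*)/2` of a square complex matrix. -/
def mRe {n : ℕ} (A : Matrix (Fin n) (Fin n) ℂ) : Matrix (Fin n) (Fin n) ℂ :=
  (1/2 : ℂ) • (A + Aᴴ)

/-- The "imaginary part" `(A - A*)/(2i)` of a square complex matrix. -/
def mIm {n : ℕ} (A : Matrix (Fin n) (Fin n) ℂ) : Matrix (Fin n) (Fin n) ℂ :=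
  (1/(2 * Complex.I) : ℂ) • (A - Aᴴ)

open scoped MatrixOrder ComplexStarModule

section NormedStarRing

variable {E : Type*} [NormedRing E] [StarRing E] [NormedStarGroup E]

lemma norm_star_mul_star_sub (x y : E) :
    ‖star x * star y - star y * star x‖ = ‖x * y - y * x‖ := by
  rw [← star_mul, ← star_mul, ← star_sub, norm_star, norm_sub_rev]

lemma norm_star_mul_sub_mul_star (x y : E) :
    ‖star x * y - y * star x‖ = ‖x * star y - star y * x‖ := by
  rw [← norm_star_mul_star_sub, star_star]

lemma norm_mul_star_sub_le {x y : E} {r δ : ℝ} (hx : ‖x‖ ≤ r) (hy : ‖y‖ ≤ r)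
    (hyy : ‖star y * y - 1‖ ≤ δ) (hyy' : ‖y * star y - 1‖ ≤ δ) (hxy : ‖x * y - y * x‖ ≤ δ) :
    ‖x * star y - star y * x‖ ≤ 3 * r ^ 2 * δ := by
  have hy' : ‖star y‖ ≤ r := by rwa [norm_star]
  have hr : 0 ≤ r := (norm_nonneg x).trans hx
  have hδ : 0 ≤ δ := (norm_nonneg _).trans hxy
  have key : x * star y - star y * x = -((star y * y - 1) * (x * star y))
      + star y * (y * x - x * y) * star y + star y * x * (y * star y - 1) := by
    noncomm_ring
  rw [key]
  calc _ ≤ ‖star y * y - 1‖ * (‖x‖ * ‖star y‖) + ‖star y‖ * ‖y * x - x * y‖ * ‖star y‖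
        + ‖star y‖ * ‖x‖ * ‖y * star y - 1‖ := by
        refine norm_add₃_le.trans (add_le_add (add_le_add ?_ ?_) ?_)
        · rw [norm_neg]; exact (norm_mul_le _ _).trans (by gcongr; exact norm_mul_le _ _)
        · exact (norm_mul_le _ _).trans (by gcongr; exact norm_mul_le _ _)
        · exact (norm_mul_le _ _).trans (by gcongr; exact norm_mul_le _ _)
    _ ≤ δ * (r * r) + r * δ * r + r * r * δ := by
        rw [norm_sub_rev] at hxy; gcongr
    _ = 3 * r ^ 2 * δ := by ring

end NormedStarRing

section ComplexNormedStarAlgebra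

variable {E : Type*} [NormedRing E] [NormedAlgebra ℂ E] [StarRing E] [StarModule ℂ E]

lemma norm_realPart_mul_sub_le (x w : E) :
    ‖(ℜ x : E) * w - w * ℜ x‖ ≤ (‖x * w - w * x‖ + ‖star x * w - w * star x‖) / 2 := by
  have h : (ℜ x : E) * w - w * ℜ x = (2⁻¹ : ℝ) • ((x * w - w * x) + (star x * w - w * star x)) := by
    rw [realPart_apply_coe]
    simp only [smul_mul_assoc, mul_smul_comm, add_mul, mul_add]
    module
  rw [h, norm_smul]
  have := norm_add_le (x * w - w * x) (star x * w - w * star x)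
  norm_num
  linarith

lemma norm_imaginaryPart_mul_sub_le (x w : E) :
    ‖(ℑ x : E) * w - w * ℑ x‖ ≤ (‖x * w - w * x‖ + ‖star x * w - w * star x‖) / 2 := by
  have h : (ℑ x : E) * w - w * ℑ x
      = (-Complex.I) • (2⁻¹ : ℝ) • ((x * w - w * x) - (star x * w - w * star x)) := by
    rw [imaginaryPart_apply_coe]
    simp only [smul_mul_assoc, mul_smul_comm, sub_mul, mul_sub]
    module
  rw [h, norm_smul, norm_smul]
  have := norm_sub_le (x * w - w * x) (star x * w - w * star x)
  norm_num
  linarith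

variable [NormedStarGroup E]

lemma norm_mul_imaginaryPart_sub_le {x y : E} {η : ℝ} (h₁ : ‖x * y - y * x‖ ≤ η)
    (h₂ : ‖x * star y - star y * x‖ ≤ η) :
    ‖x * ℑ y - ℑ y * x‖ ≤ η ∧ ‖star x * ℑ y - ℑ y * star x‖ ≤ η := by
  constructor
  · rw [norm_sub_rev]
    refine (norm_imaginaryPart_mul_sub_le y x).trans ?_
    rw [norm_sub_rev, norm_sub_rev (star y * x)]
    linarith
  · rw [norm_sub_rev]
    refine (norm_imaginaryPart_mul_sub_le y (star x)).trans ?_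
    rw [norm_sub_rev, norm_star_mul_sub_mul_star, norm_sub_rev (star y * star x),
      norm_star_mul_star_sub]
    linarith

lemma norm_parts_mul_imaginaryPart_sub_le {x y : E} {η : ℝ} (h₁ : ‖x * y - y * x‖ ≤ η)
    (h₂ : ‖x * star y - star y * x‖ ≤ η) :
    ‖(ℜ x : E) * ℑ y - ℑ y * ℜ x‖ ≤ η ∧ ‖(ℑ x : E) * ℑ y - ℑ y * ℑ x‖ ≤ η := by
  obtain ⟨hx, hx'⟩ := norm_mul_imaginaryPart_sub_le h₁ h₂
  exact ⟨(norm_realPart_mul_sub_le x _).trans (by linarith),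
    (norm_imaginaryPart_mul_sub_le x _).trans (by linarith)⟩

end ComplexNormedStarAlgebra

section CStarAlgebra

variable {A : Type*} [CStarAlgebra A]

lemma norm_le_one_add_of_norm_star_mul_self_sub_one_le {a : A} {δ : ℝ}
    (h : ‖star a * a - 1‖ ≤ δ) : ‖a‖ ≤ 1 + δ := by
  have h1 : ‖(1 : A)‖ ≤ 1 := by
    rcases subsingleton_or_nontrivial A with _ | _
    · simp [Subsingleton.elim (1 : A) 0]
    · rw [CStarRing.norm_one]
  have hsq : ‖a‖ ^ 2 ≤ 1 + δ :=
    calc ‖a‖ ^ 2 = ‖star a * a - 1 + 1‖ := by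
          rw [sub_add_cancel, CStarRing.norm_star_mul_self, sq]
      _ ≤ 1 + δ := (norm_add_le _ _).trans (by linarith)
  nlinarith [norm_nonneg a, (norm_nonneg _).trans h]

lemma norm_le_one_of_star_mul_self_eq_one {a : A} (h : star a * a = 1) : ‖a‖ ≤ 1 := by
  simpa using norm_le_one_add_of_norm_star_mul_self_sub_one_le (a := a) (δ := 0) (by simp [h])

lemma norm_parts_mul_imaginaryPart_sub_le_of_almost_unitary {x y : A} {δ : ℝ} (hδ : δ ≤ 1)
    (hx : ‖star x * x - 1‖ ≤ δ) (hy : ‖star y * y - 1‖ ≤ δ) (hy' : ‖y * star y - 1‖ ≤ δ)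
    (hxy : ‖x * y - y * x‖ ≤ δ) :
    ‖(ℜ x : A) * ℑ y - ℑ y * ℜ x‖ ≤ 12 * δ ∧ ‖(ℑ x : A) * ℑ y - ℑ y * ℑ x‖ ≤ 12 * δ := by
  have hδ0 : 0 ≤ δ := (norm_nonneg _).trans hxy
  have hx2 : ‖x‖ ≤ 2 := (norm_le_one_add_of_norm_star_mul_self_sub_one_le hx).trans (by linarith)
  have hy2 : ‖y‖ ≤ 2 := (norm_le_one_add_of_norm_star_mul_self_sub_one_le hy).trans (by linarith)
  refine norm_parts_mul_imaginaryPart_sub_le (hxy.trans (by linarith)) ?_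
  exact (norm_mul_star_sub_le hx2 hy2 hy hy' hxy).trans_eq (by ring)

variable [PartialOrder A] [StarOrderedRing A]

lemma IsSelfAdjoint.algebraMap_sq_le_mul_self {a : A} (ha : IsSelfAdjoint a) {c : ℝ}
    (hc : 0 ≤ c) (h : algebraMap ℝ A c ≤ a) : algebraMap ℝ A (c ^ 2) ≤ a * a := by
  have hb : IsSelfAdjoint (a - algebraMap ℝ A c) := ha.sub (.algebraMap A (.all c))
  have key : a * a - algebraMap ℝ A (c ^ 2) = star (a - algebraMap ℝ A c) * (a - algebraMap ℝ A c)
      + (2 * c) • (a - algebraMap ℝ A c) := by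
    rw [hb.star_eq]
    simp only [Algebra.algebraMap_eq_smul_one, sub_mul, mul_sub, smul_mul_assoc,
      mul_smul_comm, one_mul, mul_one]
    module
  rw [← sub_nonneg, key]
  exact add_nonneg (star_mul_self_nonneg _) (smul_nonneg (by positivity) (sub_nonneg.2 h))

lemma IsSelfAdjoint.isUnit_of_norm_mul_self_sub_le {h s : A} (hh : IsSelfAdjoint h) {c ε : ℝ}
    (hs : algebraMap ℝ A c ≤ s) (hε : ‖h * h - s‖ ≤ ε) (hεc : ε < c) : IsUnit h := by
  have hs' : IsSelfAdjoint s := by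
    simpa using (IsSelfAdjoint.of_nonneg (sub_nonneg.2 hs)).add (.algebraMap A (.all c))
  have hhh : IsSelfAdjoint (h * h) := by
    simpa [hh.star_eq] using IsSelfAdjoint.star_mul_self h
  have hlow : algebraMap ℝ A (c - ε) ≤ h * h := by
    have := (hhh.sub hs').neg_algebraMap_norm_le_self
    have hm := algebraMap_mono A hε
    rw [map_sub]
    calc algebraMap ℝ A c - algebraMap ℝ A ε ≤ s + -algebraMap ℝ A ‖h * h - s‖ := by
          rw [← sub_eq_add_neg]; exact sub_le_sub hs hm
      _ ≤ s + (h * h - s) := add_le_add_right this s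
      _ = h * h := add_sub_cancel s (h * h)
  have hunit := CStarAlgebra.isUnit_of_le _ hlow (isStrictlyPositive_algebraMap (sub_pos.2 hεc))
  exact ((Commute.refl h).isUnit_mul_iff.mp hunit).1

end CStarAlgebra

section SegmentCoeff

variable {A : Type*} [CStarAlgebra A] {d : ℕ}

/-- The Clifford coefficients of `(1 - t) • (1 ⊗ γ_last) + t • G̃`, where
`G̃ = ∑ ℑ aⱼ ⊗ γⱼ + ((d + 1) - ∑ ℜ aⱼ) ⊗ γ_last`. -/
def segmentCoeff (a : Fin d → A) (t : ℝ) : Fin (d + 1) → A :=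
  Fin.lastCases (1 + t • ∑ j, (1 - (ℜ (a j) : A))) fun j => t • (ℑ (a j) : A)

@[simp] lemma segmentCoeff_last (a : Fin d → A) (t : ℝ) :
    segmentCoeff a t (Fin.last d) = 1 + t • ∑ j, (1 - (ℜ (a j) : A)) :=
  Fin.lastCases_last

@[simp] lemma segmentCoeff_castSucc (a : Fin d → A) (t : ℝ) (j : Fin d) :
    segmentCoeff a t j.castSucc = t • (ℑ (a j) : A) :=
  Fin.lastCases_castSucc j

lemma isSelfAdjoint_segmentCoeff (a : Fin d → A) (t : ℝ) (i : Fin (d + 1)) :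
    IsSelfAdjoint (segmentCoeff a t i) := by
  induction i using Fin.lastCases with
  | last =>
    simp only [segmentCoeff_last]
    exact (IsSelfAdjoint.one A).add <| .smul (.all t) <|
      isSelfAdjoint_sum _ fun j _ => (IsSelfAdjoint.one A).sub (ℜ (a j)).2
  | cast j => rw [segmentCoeff_castSucc]; exact .smul (.all t) (ℑ (a j)).2

lemma segmentCoeff_last_mul_sub_mul (a : Fin d → A) (t : ℝ) (w : A) :
    segmentCoeff a t (Fin.last d) * w - w * segmentCoeff a t (Fin.last d)
      = -(t • ∑ j, ((ℜ (a j) : A) * w - w * ℜ (a j))) := by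
  simp only [segmentCoeff_last, add_mul, mul_add, one_mul, mul_one, smul_mul_assoc,
    mul_smul_comm, Finset.sum_mul, Finset.mul_sum, sub_mul, mul_sub, Finset.sum_sub_distrib,
    smul_sub]
  abel

lemma norm_segmentCoeff_mul_sub_mul_le {a : Fin d → A} {t η : ℝ} (ht : t ∈ Set.Icc (0 : ℝ) 1)
    (hη : 0 ≤ η) (hre : ∀ j k, ‖(ℜ (a j) : A) * ℑ (a k) - ℑ (a k) * ℜ (a j)‖ ≤ η)
    (him : ∀ j k, ‖(ℑ (a j) : A) * ℑ (a k) - ℑ (a k) * ℑ (a j)‖ ≤ η) (i k : Fin (d + 1)) :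
    ‖segmentCoeff a t i * segmentCoeff a t k - segmentCoeff a t k * segmentCoeff a t i‖
      ≤ d * η := by
  have ht2 : ‖t‖ * ‖t‖ ≤ 1 := by
    rw [Real.norm_of_nonneg ht.1]; nlinarith [ht.1, ht.2]
  have hlast : ∀ q : Fin d, ‖segmentCoeff a t (Fin.last d) * segmentCoeff a t q.castSucc
      - segmentCoeff a t q.castSucc * segmentCoeff a t (Fin.last d)‖ ≤ d * η := fun q => by
    rw [segmentCoeff_last_mul_sub_mul, norm_neg, segmentCoeff_castSucc]
    simp only [mul_smul_comm, smul_mul_assoc, ← smul_sub, ← Finset.smul_sum, norm_smul]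
    calc _ ≤ ‖t‖ * (‖t‖ * ∑ _j : Fin d, η) := by
          gcongr
          exact (norm_sum_le _ _).trans (Finset.sum_le_sum fun j _ => hre j q)
      _ ≤ d * η := by
          rw [← mul_assoc, Finset.sum_const, Finset.card_univ, Fintype.card_fin, nsmul_eq_mul]
          exact mul_le_of_le_one_left (by positivity) ht2
  induction i using Fin.lastCases with
  | last =>
    induction k using Fin.lastCases with
    | last => simp only [sub_self, norm_zero]; positivity
    | cast q => exact hlast q
  | cast p =>
    induction k using Fin.lastCases with
    | last => rw [norm_sub_rev]; exact hlast p
    | cast q =>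
      simp only [segmentCoeff_castSucc, mul_smul_comm, smul_mul_assoc, smul_smul, ← smul_sub,
        norm_smul]
      calc _ ≤ ‖t‖ * ‖t‖ * η := by gcongr; exacts [norm_mul_le _ _, him p q]
        _ ≤ 1 * η := by gcongr
        _ ≤ d * η := by
          gcongr
          exact_mod_cast p.pos

variable [PartialOrder A] [StarOrderedRing A]

lemma algebraMap_le_segmentCoeff_last {a : Fin d → A} {t δ : ℝ} (ht : t ∈ Set.Icc (0 : ℝ) 1)
    (hδ : 0 ≤ δ) (ha : ∀ j, ‖a j‖ ≤ 1 + δ) :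
    algebraMap ℝ A (1 - d * δ) ≤ segmentCoeff a t (Fin.last d) := by
  have hre : ∀ j, algebraMap ℝ A (-δ) ≤ 1 - ℜ (a j) := fun j => by
    have := (ℜ (a j)).2.le_algebraMap_norm_self.trans
      (algebraMap_mono A ((realPart.norm_le (a j)).trans (ha j)))
    rw [le_sub_comm, map_neg, sub_neg_eq_add, ← map_one (algebraMap ℝ A), ← map_add]
    exact this
  calc algebraMap ℝ A (1 - d * δ) ≤ algebraMap ℝ A (1 - t * (d * δ)) :=
        algebraMap_mono A (by
          have := mul_le_of_le_one_left (by positivity : (0 : ℝ) ≤ d * δ) ht.2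
          linarith)
    _ = 1 + t • ∑ _j : Fin d, algebraMap ℝ A (-δ) := by
        rw [Finset.sum_const, Finset.card_univ, Fintype.card_fin]
        simp only [Algebra.algebraMap_eq_smul_one]
        module
    _ ≤ segmentCoeff a t (Fin.last d) := by
        rw [segmentCoeff_last]
        gcongr with j
        · exact ht.1
        · exact hre j

end SegmentCoeff

namespace Matrix

section Kronecker

variable {R ι l m n p : Type*} [CommRing R]

lemma sub_kronecker (A B : Matrix l m R) (C : Matrix n p R) :
    (A - B) ⊗ₖ C = A ⊗ₖ C - B ⊗ₖ C := by
  ext; simp [kroneckerMap_apply, sub_mul]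

lemma kronecker_sub (A : Matrix l m R) (B C : Matrix n p R) :
    A ⊗ₖ (B - C) = A ⊗ₖ B - A ⊗ₖ C := by
  ext; simp [kroneckerMap_apply, mul_sub]

lemma sum_kronecker (s : Finset ι) (A : ι → Matrix l m R) (B : Matrix n p R) :
    (∑ i ∈ s, A i) ⊗ₖ B = ∑ i ∈ s, A i ⊗ₖ B := by
  ext; simp [kroneckerMap_apply, Matrix.sum_apply, Finset.sum_mul]

variable [Fintype ι] [DecidableEq ι] [Fintype m] [Fintype p] [DecidableEq p]

lemma two_smul_sum_kronecker_mul_self_sub (X : ι → Matrix m m R) (γ : ι → Matrix p p R)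
    (hγ : ∀ k l, γ k * γ l + γ l * γ k = (if k = l then (2 : R) else 0) • 1) :
    (2 : R) • ((∑ i, X i ⊗ₖ γ i) * (∑ i, X i ⊗ₖ γ i) - (∑ i, X i * X i) ⊗ₖ 1)
      = ∑ i, ∑ j, (X i * X j - X j * X i) ⊗ₖ (γ i * γ j) := by
  have hsq : (∑ i, X i ⊗ₖ γ i) * (∑ i, X i ⊗ₖ γ i) = ∑ i, ∑ j, (X i * X j) ⊗ₖ (γ i * γ j) := by
    simp only [Finset.sum_mul_sum, mul_kronecker_mul]
  have hpair : ∀ i j, (X i * X j) ⊗ₖ (γ i * γ j) + (X j * X i) ⊗ₖ (γ j * γ i)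
      = (X i * X j - X j * X i) ⊗ₖ (γ i * γ j)
        + (if i = j then (2 : R) else 0) • ((X j * X i) ⊗ₖ (1 : Matrix p p R)) := by
    intro i j
    rw [← kronecker_smul, ← hγ i j, kronecker_add, sub_kronecker]
    abel
  have hdiag : ∑ i, ∑ j, (if i = j then (2 : R) else 0) • ((X j * X i) ⊗ₖ (1 : Matrix p p R))
      = (2 : R) • (∑ i, X i * X i) ⊗ₖ 1 := by
    simp [ite_smul, sum_kronecker, Finset.smul_sum]
  have hswap : ∑ i, ∑ j, (X j * X i) ⊗ₖ (γ j * γ i) = ∑ i, ∑ j, (X i * X j) ⊗ₖ (γ i * γ j) :=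
    Finset.sum_comm
  calc _ = ∑ i, ∑ j, ((X i * X j) ⊗ₖ (γ i * γ j) + (X j * X i) ⊗ₖ (γ j * γ i))
        - (2 : R) • (∑ i, X i * X i) ⊗ₖ 1 := by
        simp only [Finset.sum_add_distrib, hswap, smul_sub, two_smul, hsq]
    _ = _ := by simp only [hpair, Finset.sum_add_distrib, hdiag, add_sub_cancel_right]

end Kronecker

section L2OpNorm

variable {m p : Type*} [Fintype m] [DecidableEq m] [Fintype p] [DecidableEq p]

lemma algebraMap_kronecker_algebraMap (a b : ℝ) :
    algebraMap ℝ (Matrix m m ℂ) a ⊗ₖ algebraMap ℝ (Matrix p p ℂ) b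
      = algebraMap ℝ (Matrix (m × p) (m × p) ℂ) (a * b) := by
  simp only [Algebra.algebraMap_eq_smul_one, smul_kronecker, kronecker_smul, one_kronecker_one,
    smul_smul, mul_comm]

lemma algebraMap_le_kronecker_one {S : Matrix m m ℂ} {c : ℝ} (h : algebraMap ℝ _ c ≤ S) :
    algebraMap ℝ _ c ≤ S ⊗ₖ (1 : Matrix p p ℂ) := by
  rw [le_iff] at h ⊢
  have : S ⊗ₖ (1 : Matrix p p ℂ) - algebraMap ℝ _ c = (S - algebraMap ℝ _ c) ⊗ₖ 1 := by
    rw [sub_kronecker, ← map_one (algebraMap ℝ (Matrix p p ℂ)), algebraMap_kronecker_algebraMap,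
      mul_one, map_one]
  rw [this]
  exact h.kronecker PosSemidef.one

lemma kronecker_le_algebraMap_norm_mul_norm {P : Matrix m m ℂ} {Q : Matrix p p ℂ}
    (hP : 0 ≤ P) (hQ : 0 ≤ Q) : P ⊗ₖ Q ≤ algebraMap ℝ _ (‖P‖ * ‖Q‖) := by
  have hP' := IsSelfAdjoint.le_algebraMap_norm_self (IsSelfAdjoint.of_nonneg hP)
  have hQ' := IsSelfAdjoint.le_algebraMap_norm_self (IsSelfAdjoint.of_nonneg hQ)
  have key : algebraMap ℝ _ (‖P‖ * ‖Q‖) - P ⊗ₖ Q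
      = (algebraMap ℝ _ ‖P‖ - P) ⊗ₖ Q + algebraMap ℝ _ ‖P‖ ⊗ₖ (algebraMap ℝ _ ‖Q‖ - Q) := by
    rw [sub_kronecker, kronecker_sub, algebraMap_kronecker_algebraMap]
    abel
  rw [le_iff, key]
  exact ((le_iff.1 hP').kronecker hQ.posSemidef).add
    ((algebraMap_nonneg _ (norm_nonneg P)).posSemidef.kronecker (le_iff.1 hQ'))

lemma l2_opNorm_kronecker_le (A : Matrix m m ℂ) (B : Matrix p p ℂ) :
    ‖A ⊗ₖ B‖ ≤ ‖A‖ * ‖B‖ := by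
  have hA : 0 ≤ star A * A := star_mul_self_nonneg A
  have hB : 0 ≤ star B * B := star_mul_self_nonneg B
  have hsq : ‖A ⊗ₖ B‖ ^ 2 ≤ (‖A‖ * ‖B‖) ^ 2 := by
    calc ‖A ⊗ₖ B‖ ^ 2 = ‖(star A * A) ⊗ₖ (star B * B)‖ := by
          rw [sq, ← CStarRing.norm_star_mul_self, star_eq_conjTranspose, conjTranspose_kronecker,
            ← mul_kronecker_mul, star_eq_conjTranspose, star_eq_conjTranspose]
      _ ≤ ‖star A * A‖ * ‖star B * B‖ :=
          (CStarAlgebra.norm_le_iff_le_algebraMap _ (by positivity)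
            (PosSemidef.kronecker hA.posSemidef hB.posSemidef).nonneg).2
            (kronecker_le_algebraMap_norm_mul_norm hA hB)
      _ = (‖A‖ * ‖B‖) ^ 2 := by
          rw [CStarRing.norm_star_mul_self, CStarRing.norm_star_mul_self]; ring
  exact (pow_le_pow_iff_left₀ (norm_nonneg _) (by positivity) two_ne_zero).1 hsq

variable {ι : Type*} [Fintype ι] [DecidableEq ι]

lemma norm_sum_kronecker_mul_self_sub_le (X : ι → Matrix m m ℂ) {γ : ι → Matrix p p ℂ}
    (hγ : ∀ k, (γ k).IsHermitian)
    (hcliff : ∀ k l, γ k * γ l + γ l * γ k = (if k = l then (2 : ℂ) else 0) • 1)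
    {η : ℝ} (hη : ∀ i j, ‖X i * X j - X j * X i‖ ≤ η) :
    ‖(∑ i, X i ⊗ₖ γ i) * (∑ i, X i ⊗ₖ γ i) - (∑ i, X i * X i) ⊗ₖ 1‖
      ≤ Fintype.card ι ^ 2 * η / 2 := by
  have hγ1 : ∀ k, ‖γ k‖ ≤ 1 := fun k => norm_le_one_of_star_mul_self_eq_one <| by
    have h := hcliff k k
    rw [if_pos rfl, ← two_smul ℂ] at h
    rw [star_eq_conjTranspose, (hγ k).eq]
    exact smul_right_injective _ two_ne_zero h
  have hterm : ∀ i j, ‖(X i * X j - X j * X i) ⊗ₖ (γ i * γ j)‖ ≤ η := fun i j =>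
    calc _ ≤ ‖X i * X j - X j * X i‖ * (‖γ i‖ * ‖γ j‖) :=
          (l2_opNorm_kronecker_le _ _).trans (by gcongr; exact norm_mul_le _ _)
      _ ≤ η * (1 * 1) := by
          have := (norm_nonneg _).trans (hη i j)
          gcongr
          exacts [hη i j, hγ1 i, hγ1 j]
      _ = η := by ring
  have h2 : 2 * ‖(∑ i, X i ⊗ₖ γ i) * (∑ i, X i ⊗ₖ γ i) - (∑ i, X i * X i) ⊗ₖ 1‖
      ≤ Fintype.card ι ^ 2 * η := by
    calc _ = ‖∑ i, ∑ j, (X i * X j - X j * X i) ⊗ₖ (γ i * γ j)‖ := by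
          rw [← two_smul_sum_kronecker_mul_self_sub X γ hcliff, norm_smul]; norm_num
      _ ≤ ∑ i : ι, ∑ j : ι, η :=
          (norm_sum_le _ _).trans (Finset.sum_le_sum fun i _ =>
            (norm_sum_le _ _).trans (Finset.sum_le_sum fun j _ => hterm i j))
      _ = Fintype.card ι ^ 2 * η := by
          simp only [Finset.sum_const, Finset.card_univ, nsmul_eq_mul]; ring
  linarith

theorem isUnit_sum_kronecker_of_clifford {X : ι → Matrix m m ℂ} {γ : ι → Matrix p p ℂ}
    (hX : ∀ i, (X i).IsHermitian) (hγ : ∀ k, (γ k).IsHermitian)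
    (hcliff : ∀ k l, γ k * γ l + γ l * γ k = (if k = l then (2 : ℂ) else 0) • 1)
    {c η : ℝ} (hc : 0 ≤ c) {i₀ : ι} (hi₀ : algebraMap ℝ _ c ≤ X i₀)
    (hη : ∀ i j, ‖X i * X j - X j * X i‖ ≤ η) (hsmall : Fintype.card ι ^ 2 * η / 2 < c ^ 2) :
    IsUnit (∑ i, X i ⊗ₖ γ i) := by
  have hsa : IsSelfAdjoint (∑ i, X i ⊗ₖ γ i) := isSelfAdjoint_sum _ fun i _ => by
    rw [IsSelfAdjoint, star_eq_conjTranspose, conjTranspose_kronecker, (hX i).eq, (hγ i).eq]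
  have hsq : algebraMap ℝ _ (c ^ 2) ≤ ∑ i, X i * X i :=
    ((hX i₀).isSelfAdjoint.algebraMap_sq_le_mul_self hc hi₀).trans <|
      Finset.single_le_sum (f := fun i => X i * X i)
        (fun i _ => by
          simpa only [star_eq_conjTranspose, (hX i).eq] using star_mul_self_nonneg (X i))
        (Finset.mem_univ i₀)
  exact hsa.isUnit_of_norm_mul_self_sub_le (algebraMap_le_kronecker_one hsq)
    (norm_sum_kronecker_mul_self_sub_le X hγ hcliff hη) hsmall

end L2OpNorm

end Matrix

lemma mRe_eq_realPart {n : ℕ} (A : Matrix (Fin n) (Fin n) ℂ) : mRe A = ℜ A := by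
  rw [mRe, realPart_apply_coe, star_eq_conjTranspose, ← Complex.coe_smul]
  norm_num

lemma mIm_eq_imaginaryPart {n : ℕ} (A : Matrix (Fin n) (Fin n) ℂ) : mIm A = ℑ A := by
  rw [mIm, imaginaryPart_apply_coe, star_eq_conjTranspose, ← Complex.coe_smul, smul_smul]
  congr 1
  rw [one_div, mul_inv, Complex.inv_I]
  push_cast
  ring

lemma segment_eq_sum_segmentCoeff_kronecker {n d p : ℕ} (A : Fin d → Matrix (Fin n) (Fin n) ℂ)
    (γ : Fin (d + 1) → Matrix (Fin p) (Fin p) ℂ) (t : ℝ) :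
    (1 - t) • ((1 : Matrix (Fin n) (Fin n) ℂ) ⊗ₖ γ (Fin.last d))
      + t • ((∑ j, mIm (A j) ⊗ₖ γ j.castSucc)
        + (((d : ℂ) + 1) • (1 : Matrix (Fin n) (Fin n) ℂ) - ∑ j, mRe (A j)) ⊗ₖ γ (Fin.last d))
      = ∑ i, segmentCoeff A t i ⊗ₖ γ i := by
  rw [Fin.sum_univ_castSucc]
  simp only [segmentCoeff_castSucc, segmentCoeff_last, mRe_eq_realPart, mIm_eq_imaginaryPart,
    Finset.sum_sub_distrib, Finset.sum_const, Finset.card_univ, Fintype.card_fin, add_kronecker,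
    sub_kronecker, smul_kronecker, Matrix.sum_kronecker, Finset.smul_sum, smul_add, smul_sub]
  module

lemma width_bounds {d : ℕ} {δ : ℝ} (hd : 1 ≤ d) (hδ0 : 0 ≤ δ)
    (hδ : δ ≤ (10 * ((d : ℝ) + 1) ^ 3)⁻¹) :
    δ ≤ 1 ∧ 0 ≤ 1 - d * δ ∧ ((d : ℝ) + 1) ^ 2 * (d * (12 * δ)) / 2 < (1 - d * δ) ^ 2 := by
  have hd' : (1 : ℝ) ≤ d := by exact_mod_cast hd
  have hsmall : ((d : ℝ) + 1) ^ 2 * (d * δ) ≤ 1 / 10 := by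
    have h := mul_le_mul_of_nonneg_left hδ (by positivity : (0 : ℝ) ≤ 10 * (d + 1) ^ 3)
    rw [mul_inv_cancel₀ (by positivity)] at h
    nlinarith
  have hdδ : d * δ ≤ 1 / 10 := (le_mul_of_one_le_left (by positivity) (by nlinarith)).trans hsmall
  refine ⟨(le_mul_of_one_le_left hδ0 hd').trans (by linarith), by linarith, by nlinarith⟩

/-- for every `d ≥ 1` there is a `δ₀ > 0` depending only on `d` such that for
any fuzzy `d`-torus `A_1, …, A_d` of width `δ ≤ δ₀` and any selfadjoint Clifford family
`γ_1, …, γ_{d+1}`, the straight-line path from `1 ⊗ γ_{d+1}` to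
`G̃ = ∑ Im(A_j) ⊗ γ_j + ((d+1)·1 - ∑ Re(A_j)) ⊗ γ_{d+1}` consists of invertible matrices;
in particular `G̃` is joined to `1 ⊗ γ_{d+1}` within the invertible matrices. -/
theorem stmt5 (d : ℕ) (hd : 1 ≤ d) :
    ∃ δ₀ : ℝ, 0 < δ₀ ∧
      ∀ (n d' : ℕ) (A : Fin d → Matrix (Fin n) (Fin n) ℂ) (δ : ℝ), δ ≤ δ₀ →
        (∀ j, IsUnit (A j)) →
        (∀ j, ‖A j * (A j)ᴴ - 1‖ ≤ δ) →
        (∀ j, ‖(A j)ᴴ * A j - 1‖ ≤ δ) →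
        (∀ i j, ‖A j * A i - A i * A j‖ ≤ δ) →
        ∀ γ : Fin (d+1) → Matrix (Fin d') (Fin d') ℂ,
          (∀ k, (γ k).IsHermitian) →
          (∀ k l, γ k * γ l + γ l * γ k = (if k = l then (2:ℂ) else 0) • 1) →
          ∀ Gt : Matrix (Fin n × Fin d') (Fin n × Fin d') ℂ,
            Gt = (∑ j : Fin d, mIm (A j) ⊗ₖ γ j.castSucc) +
              ((((d : ℂ) + 1) • (1 : Matrix (Fin n) (Fin n) ℂ) - ∑ j : Fin d, mRe (A j)) ⊗ₖ
                γ (Fin.last d)) →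
            (∀ t : ℝ, t ∈ Set.Icc (0:ℝ) 1 →
              IsUnit ((1 - t) • ((1 : Matrix (Fin n) (Fin n) ℂ) ⊗ₖ γ (Fin.last d)) + t • Gt)) ∧
            JoinedIn {M : Matrix (Fin n × Fin d') (Fin n × Fin d') ℂ | IsUnit M}
              ((1 : Matrix (Fin n) (Fin n) ℂ) ⊗ₖ γ (Fin.last d)) Gt := by
  refine ⟨(10 * (d + 1) ^ 3)⁻¹, by positivity, ?_⟩
  intro n d' A δ hδ _ hAA hAA' hcomm γ hγ hcliff Gt hGt
  have hδ0 : 0 ≤ δ := (norm_nonneg _).trans (hcomm ⟨0, hd⟩ ⟨0, hd⟩)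
  obtain ⟨hδ1, hc, hsmall⟩ := width_bounds hd hδ0 hδ
  have hparts := fun j k => norm_parts_mul_imaginaryPart_sub_le_of_almost_unitary
    hδ1 (hAA' j) (hAA' k) (hAA k) (hcomm k j)
  have hpath : ∀ t ∈ Set.Icc (0 : ℝ) 1,
      IsUnit ((1 - t) • ((1 : Matrix (Fin n) (Fin n) ℂ) ⊗ₖ γ (Fin.last d)) + t • Gt) := by
    intro t ht
    rw [hGt, segment_eq_sum_segmentCoeff_kronecker]
    exact isUnit_sum_kronecker_of_clifford (isSelfAdjoint_segmentCoeff A t) hγ hcliff hc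
      (algebraMap_le_segmentCoeff_last ht hδ0
        fun j => norm_le_one_add_of_norm_star_mul_self_sub_one_le (hAA' j))
      (norm_segmentCoeff_mul_sub_mul_le ht (by positivity) (fun j k => (hparts j k).1)
        fun j k => (hparts j k).2) (by simpa using hsmall)
  refine ⟨hpath, JoinedIn.of_segment_subset ?_⟩
  rw [segment_eq_image]
  rintro _ ⟨t, ht, rfl⟩
  exact hpath t ht
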